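/- Expressed in the expectation parameter η = E[|X|^l] > 0, the differential entropy of the AMEF of degree l equals b_l + (1/l)·log η, where b_l = log(2·Γ(1/l)·(e·l)^(1/l)/l). -/

import Mathlib

/-! For a density `exp (θ T - F)` normalised by `exp F = ∫ exp (θ T)`, the log-density is
`θ T - F`, so the entropy is `F - θ E[T]`. For `T = |x| ^ l` the substitution `u = c x ^ l`
turns both `∫ exp (-c |x| ^ l)` and `∫ |x| ^ l exp (-c |x| ^ l)` into Gamma integrals, whose ratio
gives `E |X| ^ l = 1 / (l c) = η` with `c = -θ`. Hence the entropy is `F + 1 / l`, and writing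
`-θ = 1 / (l η)` in `F` yields `b + (1 / l) log η`. -/

open Real MeasureTheory

theorem integrable_comp_abs_of_integrableOn_Ioi {f : ℝ → ℝ} (hf : IntegrableOn f (Set.Ioi 0)) :
    Integrable fun x : ℝ => f |x| := by
  have hIoi : IntegrableOn (fun x : ℝ => f |x|) (Set.Ioi 0) :=
    hf.congr_fun (fun x hx => by rw [abs_of_pos hx]) measurableSet_Ioi
  have hIic : IntegrableOn (fun x : ℝ => f |x|) (Set.Iic 0) := by
    have hneg : MeasurableEmbedding fun x : ℝ => -x := (Homeomorph.neg ℝ).measurableEmbedding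
    rw [← Measure.map_neg_eq_self (volume : Measure ℝ), hneg.integrableOn_map_iff]
    simp_rw [Function.comp_def, abs_neg, Set.neg_preimage, Set.neg_Iic, neg_zero]
    rwa [integrableOn_Ici_iff_integrableOn_Ioi]
  rw [← integrableOn_univ, ← Set.Iic_union_Ioi (a := (0 : ℝ)), integrableOn_union]
  exact ⟨hIic, hIoi⟩

section ExpFamily

variable {α : Type*} [MeasurableSpace α] {μ : Measure α} {T : α → ℝ} {θ F : ℝ}

theorem expFamily_entropy_eq (hexp : Integrable (fun x => exp (θ * T x)) μ)
    (hTexp : Integrable (fun x => T x * exp (θ * T x)) μ) (hF : ∫ x, exp (θ * T x) ∂μ = exp F) :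
    -∫ x, exp (θ * T x - F) * log (exp (θ * T x - F)) ∂μ =
      F - θ * ∫ x, T x * exp (θ * T x - F) ∂μ := by
  have hlog : ∀ x, exp (θ * T x - F) * log (exp (θ * T x - F)) =
      θ * (T x * exp (θ * T x) / exp F) - F * (exp (θ * T x) / exp F) := by
    intro x
    rw [log_exp, exp_sub]
    ring
  have hmass : ∫ x, exp (θ * T x) / exp F ∂μ = 1 := by
    rw [integral_div, hF, div_self (exp_ne_zero F)]
  simp_rw [hlog]
  rw [integral_sub ((hTexp.div_const _).const_mul _) ((hexp.div_const _).const_mul _),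
    integral_const_mul, integral_const_mul, hmass]
  simp_rw [exp_sub, mul_div_assoc]
  ring

end ExpFamily

section AbsPowerExponential

variable {p c : ℝ}

theorem integrable_abs_rpow_mul_exp_neg_mul_abs_rpow {q : ℝ} (hp : 0 < p) (hq : -1 < q)
    (hc : 0 < c) :
    Integrable fun x : ℝ => |x| ^ q * exp (-c * |x| ^ p) :=
  integrable_comp_abs_of_integrableOn_Ioi (f := fun x => x ^ q * exp (-c * x ^ p))
    (integrableOn_rpow_mul_exp_neg_mul_rpow hq hp hc)

theorem integrable_exp_neg_mul_abs_rpow (hp : 0 < p) (hc : 0 < c) :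
    Integrable fun x : ℝ => exp (-c * |x| ^ p) := by
  simpa using integrable_abs_rpow_mul_exp_neg_mul_abs_rpow hp neg_one_lt_zero hc

theorem integral_exp_neg_mul_abs_rpow (hp : 0 < p) (hc : 0 < c) :
    ∫ x : ℝ, exp (-c * |x| ^ p) = 2 * c ^ (-1 / p) * Gamma (1 / p + 1) := by
  rw [integral_comp_abs (f := fun x => exp (-c * x ^ p)), integral_exp_neg_mul_rpow hp hc,
    mul_assoc]

theorem integral_abs_rpow_mul_exp_neg_mul_abs_rpow (hp : 0 < p) (hc : 0 < c) :
    ∫ x : ℝ, |x| ^ p * exp (-c * |x| ^ p) = (p * c)⁻¹ * ∫ x : ℝ, exp (-c * |x| ^ p) := by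
  rw [integral_comp_abs (f := fun x => x ^ p * exp (-c * x ^ p)),
    integral_rpow_mul_exp_neg_mul_rpow hp (by linarith) hc, integral_exp_neg_mul_abs_rpow hp hc,
    show (p + 1) / p = 1 / p + 1 by field_simp; ring,
    show -(p + 1) / p = -1 / p + -1 by field_simp; ring, rpow_add hc, rpow_neg_one]
  ring

end AbsPowerExponential

theorem amef_entropy_eq {p c F : ℝ} (hp : 0 < p) (hc : 0 < c)
    (hF : ∫ x : ℝ, exp (-c * |x| ^ p) = exp F) :
    -∫ x : ℝ, exp (-c * |x| ^ p - F) * log (exp (-c * |x| ^ p - F)) = F + 1 / p := by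
  have hmean : ∫ x : ℝ, |x| ^ p * exp (-c * |x| ^ p - F) = (p * c)⁻¹ := by
    simp_rw [exp_sub, ← mul_div_assoc]
    rw [integral_div, integral_abs_rpow_mul_exp_neg_mul_abs_rpow hp hc, hF,
      mul_div_cancel_right₀ _ (exp_ne_zero F)]
  rw [expFamily_entropy_eq (T := fun x => |x| ^ p) (integrable_exp_neg_mul_abs_rpow hp hc)
    (integrable_abs_rpow_mul_exp_neg_mul_abs_rpow hp (by linarith) hc) hF, hmean]
  field_simp
  ring

theorem amef_entropy_expectation (l : ℕ) (hl : 1 ≤ l) (θ : ℝ) (hθ : θ < 0)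
    (F η b : ℝ)
    (hF : F = Real.log 2 + Real.log (Real.Gamma (1 / l)) - Real.log l - (1 / l) * Real.log (-θ))
    (hη : η = -1 / (l * θ))
    (hb : b = Real.log (2 * Real.Gamma (1 / l) * (Real.exp 1 * l) ^ ((1 : ℝ) / l) / l)) :
    -∫ x : ℝ, Real.exp (θ * |x| ^ l - F) * Real.log (Real.exp (θ * |x| ^ l - F)) =
      b + (1 / l) * Real.log η := by
  obtain ⟨c, hc, rfl⟩ : ∃ c, 0 < c ∧ θ = -c := ⟨-θ, by linarith, by ring⟩
  have hl0 : (0 : ℝ) < l := by exact_mod_cast hl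
  have hΓ : 0 < Gamma (1 / l) := Gamma_pos_of_pos (by positivity)
  have hZ : ∫ x : ℝ, exp (-c * |x| ^ (l : ℝ)) = exp F := by
    rw [integral_exp_neg_mul_abs_rpow hl0 hc, Gamma_add_one (by positivity), hF, neg_neg,
      rpow_def_of_pos hc, exp_sub, exp_sub, exp_add, exp_log two_pos, exp_log hΓ, exp_log hl0,
      show log c * (-1 / l) = -(1 / l * log c) by ring, exp_neg]
    field_simp
  have hlogη : log η = -(log l + log c) := by
    rw [hη, show -1 / (l * -c) = ((l : ℝ) * c)⁻¹ by field_simp, log_inv, log_mul hl0.ne' hc.ne']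
  have hlogb : b = log 2 + log (Gamma (1 / l)) + 1 / l * (1 + log l) - log l := by
    rw [hb, log_div (by positivity) hl0.ne', log_mul (by positivity) (by positivity),
      log_rpow (by positivity), log_mul (exp_pos 1).ne' hl0.ne', log_exp,
      log_mul two_ne_zero hΓ.ne']
  simp_rw [← rpow_natCast]
  rw [amef_entropy_eq hl0 hc hZ, hlogη, hlogb, hF, neg_neg]
  ring
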